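/- arXiv:2103.14851 — 4 statements merged into one kernel-verified Lean document; each statement's English description precedes it below -/
import Mathlib

section
/- For integers $k \ge 1$, $i \ge 0$, $e \ge 1$, define $f_i(k,e) = \sum_{j=0}^{e} \binom{e-j}{i}\binom{k+e-i-2}{j} t^j (1-t)^{e-i-j}$ in $\mathbb{Q}[t]$ (where binomials with negative upper argument follow the convention $\binom{n-1}{n}=1$ if $n=0$ and $0$ otherwise, and negative powers of $(1-t)$ do not occur when $i \le e$; take the terms to vanish when $e-i-j<0$ by treating $(1-t)^{e-i-j}$ via the polynomial convention of only summing valid terms). Then $f_i(k+1,e) = f_i(k,e) + t\, f_i(k+1,e-1)$. -/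
/-!
Write `e = i + m`. For `m ≥ 1` the three sums differ only in the second binomial coefficient:
`f_i(k+1, e)` carries `binom(N+1, j)` with `N = k+m-2`, the other two carry `binom(N, j)`.
Pascal's rule `binom(N+1, j) = binom(N, j) + binom(N, j-1)` splits the first sum in two, and
after the shift `j ↦ j+1` the part with `binom(N, j-1)` is exactly `t · f_i(k+1, e-1)`.
For `e ≤ i` every sum has at most the single term `j = 0`.
-/

open Polynomial Finset

/-- The polynomial `f_i(k,e) ∈ ℚ[t]` of Hirose–Murahara–Ono, with the sum restricted to
indices `j` with `0 ≤ j ≤ e - i` so that all exponents of `(1-t)` are nonnegative, and with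
the Pascal-type convention for binomial coefficients (truncated subtraction realizes
`binom(n-1,n) = 1` if `n = 0` and `0` otherwise). -/
noncomputable def fHMO (i k e : ℕ) : Polynomial ℚ :=
  ∑ j ∈ Finset.range (e - i + 1),
    (((e - j).choose i : ℚ) * ((k + e - i - 2).choose j : ℚ)) •
      (X ^ j * (1 - X) ^ (e - i - j))

section

variable {R : Type*} [CommSemiring R]

def binomialWeightedSum (a : ℕ → R) (N m : ℕ) (x y : R) : R :=
  ∑ j ∈ range (m + 1), a (m - j) * N.choose j * x ^ j * y ^ (m - j)

theorem binomialWeightedSum_succ_succ (a : ℕ → R) (N m : ℕ) (x y : R) :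
    binomialWeightedSum a (N + 1) (m + 1) x y =
      binomialWeightedSum a N (m + 1) x y + x * binomialWeightedSum a N m x y := by
  simp only [binomialWeightedSum]
  rw [sum_range_succ' _ (m + 1), sum_range_succ' _ (m + 1), mul_sum, add_right_comm,
    ← sum_add_distrib]
  congr 1
  · refine sum_congr rfl fun j _ => ?_
    rw [Nat.choose_succ_succ', Nat.succ_sub_succ]
    push_cast
    ring
  · simp

end

theorem fHMO_eq_binomialWeightedSum (i k m : ℕ) :
    fHMO i k (i + m) =
      binomialWeightedSum (fun l => ((i + l).choose i : ℚ[X])) (k + m - 2) m X (1 - X) := by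
  rw [fHMO, binomialWeightedSum, Nat.add_sub_cancel_left, show k + (i + m) - i = k + m by omega]
  refine sum_congr rfl fun j hj => ?_
  rw [show i + m - j = i + (m - j) by have := mem_range.1 hj; omega, ← Nat.cast_mul,
    Nat.cast_smul_eq_nsmul, nsmul_eq_mul, Nat.cast_mul]
  ring

theorem stmt0 (k i e : ℕ) (hk : 1 ≤ k) (he : 1 ≤ e) :
    fHMO i (k + 1) e = fHMO i k e + X * fHMO i (k + 1) (e - 1) := by
  rcases le_or_gt e i with hei | hie
  · have hchoose : (e - 1).choose i = 0 := Nat.choose_eq_zero_of_lt (by omega)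
    simp [fHMO, Nat.sub_eq_zero_of_le hei, Nat.sub_eq_zero_of_le (e.sub_le 1 |>.trans hei),
      hchoose]
  · obtain ⟨m, rfl⟩ : ∃ m, e = i + (m + 1) := ⟨e - i - 1, by omega⟩
    obtain ⟨n, rfl⟩ : ∃ n, k = n + 1 := ⟨k - 1, by omega⟩
    rw [show i + (m + 1) - 1 = i + m by omega, fHMO_eq_binomialWeightedSum,
      fHMO_eq_binomialWeightedSum, fHMO_eq_binomialWeightedSum,
      show n + 1 + 1 + (m + 1) - 2 = (n + m) + 1 by omega,
      show n + 1 + (m + 1) - 2 = n + m by omega, show n + 1 + 1 + m - 2 = n + m by omega]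
    exact binomialWeightedSum_succ_succ _ _ _ _ _
end

section
/- For a positive integer $k$ and nonnegative integers $e$ and $i$, with $f_i(k,e) = \sum_{j=0}^{e-i} \binom{e-j}{i}\binom{k+e-i-2}{j} t^j (1-t)^{e-i-j} \in \mathbb{Q}[t]$, one has the recurrence $f_{i+1}(k+1,e) - (1-t)f_{i+1}(k+2,e) + f_i(k,e) - f_i(k+1,e) = 0$. -/
/-!
Write `S(a, m, n) = ∑_{j ≤ n} a_j C(m, j) x^j y^(n-j)`, so that
`f_i(k, e) = S(C(e - ·, i), k + e - i - 2, e - i)` at `x = t`, `y = 1 - t`.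
Splitting off the top term gives `S(a, m, n + 1) = y S(a, m, n) + a_(n+1) C(m, n+1) x^(n+1)`, and
Pascal's rule in `m` gives `S(a, m + 1, n + 1) = S(a, m, n + 1) + x S(a(· + 1), m, n)`.
For `e = i + d + 1`, `m = k + d - 1`, `α_j = C(i+d+1-j, i+1)` and `β_j = C(i+d+1-j, i)`,
these rules (and `α_(d+1) = 0`) reduce the recurrence to
`x (S(α, m, d) - S(α(· + 1), m, d) - S(β(· + 1), m, d)) = 0`, which is Pascal's rule
`α_j = α_(j+1) + β_(j+1)` once more.
-/

open Polynomial Finset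

section BinomialSum

variable {R : Type*} [CommSemiring R]

def binomialSum (a : ℕ → ℕ) (m n : ℕ) (x y : R) : R :=
  ∑ j ∈ range (n + 1), (a j * m.choose j) • (x ^ j * y ^ (n - j))

variable (m n : ℕ) (x y : R)

theorem binomialSum_congr {a b : ℕ → ℕ} (h : ∀ j ≤ n, a j = b j) :
    binomialSum a m n x y = binomialSum b m n x y :=
  sum_congr rfl fun j hj => by rw [h j (Nat.lt_succ_iff.mp (mem_range.mp hj))]

theorem binomialSum_add (a b : ℕ → ℕ) :
    binomialSum (fun j => a j + b j) m n x y = binomialSum a m n x y + binomialSum b m n x y := by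
  simp only [binomialSum, add_mul, add_smul, sum_add_distrib]

theorem binomialSum_succ_right (a : ℕ → ℕ) :
    binomialSum a m (n + 1) x y =
      y * binomialSum a m n x y + (a (n + 1) * m.choose (n + 1)) • x ^ (n + 1) := by
  rw [binomialSum, sum_range_succ, binomialSum, mul_sum, Nat.sub_self, pow_zero, mul_one]
  congr 1
  refine sum_congr rfl fun j hj => ?_
  rw [Nat.succ_sub (Nat.lt_succ_iff.mp (mem_range.mp hj)), mul_smul_comm, pow_succ]
  ring

theorem binomialSum_succ_choose (a : ℕ → ℕ) :
    binomialSum a (m + 1) (n + 1) x y =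
      binomialSum a m (n + 1) x y + x * binomialSum (fun j => a (j + 1)) m n x y := by
  simp only [binomialSum]
  rw [sum_range_succ' _ (n + 1), sum_range_succ' _ (n + 1), mul_sum]
  simp only [Nat.choose_zero_right, Nat.choose_succ_succ', Nat.succ_sub_succ, mul_add, add_smul,
    sum_add_distrib]
  rw [add_comm (∑ j ∈ range (n + 1), _), add_assoc, add_assoc, add_comm (_ • _)]
  congr 2
  refine sum_congr rfl fun j _ => ?_
  rw [mul_smul_comm, pow_succ]
  ring

end BinomialSum

theorem binomialSum_recurrence {R : Type*} [CommRing R] {α β : ℕ → ℕ} {d : ℕ}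
    (htop : α (d + 1) = 0) (hpascal : ∀ j ≤ d, α j = α (j + 1) + β (j + 1))
    (m : ℕ) {x y : R} (hxy : x + y = 1) :
    binomialSum α m d x y - y * binomialSum α (m + 1) d x y
      + binomialSum β m (d + 1) x y - binomialSum β (m + 1) (d + 1) x y = 0 := by
  have hα : ∀ m, binomialSum α m (d + 1) x y = y * binomialSum α m d x y := fun m => by
    rw [binomialSum_succ_right, htop, zero_mul, zero_smul, add_zero]
  have hsplit := binomialSum_add m d x y (fun j => α (j + 1)) (fun j => β (j + 1))
  rw [← binomialSum_congr m d x y hpascal] at hsplit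
  rw [← hα, binomialSum_succ_choose, hα, binomialSum_succ_choose]
  linear_combination x * hsplit - binomialSum α m d x y * hxy

theorem fHMO_eq_binomialSum (i k e : ℕ) :
    fHMO i k e = binomialSum (fun j => (e - j).choose i) (k + e - i - 2) (e - i) X (1 - X) := by
  simp only [fHMO, binomialSum, ← Nat.cast_mul, Nat.cast_smul_eq_nsmul]

theorem stmt1 (k i e : ℕ) (hk : 1 ≤ k) :
    fHMO (i + 1) (k + 1) e - (1 - X) * fHMO (i + 1) (k + 2) e
      + fHMO i k e - fHMO i (k + 1) e = 0 := by
  obtain ⟨m, rfl⟩ := Nat.exists_eq_add_of_le' hk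
  simp only [fHMO_eq_binomialSum]
  rcases le_or_gt e i with hei | hei
  · have hchoose : e.choose (i + 1) = 0 := Nat.choose_eq_zero_of_lt (by omega)
    simp [binomialSum, Nat.sub_eq_zero_of_le hei, Nat.sub_eq_zero_of_le (hei.trans i.le_succ),
      hchoose]
  · obtain ⟨d, rfl⟩ := Nat.exists_eq_add_of_lt hei
    have hm₁ : m + 1 + 1 + (i + d + 1) - (i + 1) - 2 = m + d := by omega
    have hm₂ : m + 1 + 2 + (i + d + 1) - (i + 1) - 2 = m + d + 1 := by omega
    have hm₃ : m + 1 + (i + d + 1) - i - 2 = m + d := by omega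
    have hm₄ : m + 1 + 1 + (i + d + 1) - i - 2 = m + d + 1 := by omega
    rw [hm₁, hm₂, hm₃, hm₄, show i + d + 1 - (i + 1) = d by omega,
      show i + d + 1 - i = d + 1 by omega]
    refine binomialSum_recurrence ?_ (fun j hj => ?_) (m + d) (add_sub_cancel X 1)
    · simp
    · rw [show i + d + 1 - j = i + d - j + 1 by omega, Nat.choose_succ_succ', add_comm,
        show i + d + 1 - (j + 1) = i + d - j by omega]
end

section
/- For positive integers $k > r \ge 1$, the following polynomial identity holds in $\mathbb{Q}[t]$: $\sum_{e=0}^{r-2} (-1)^{r-e} \Big(\sum_{j=0}^{e} \binom{k-r+e}{j} t^j (1-t)^{e-j}\Big) \binom{k}{r-e-1} = \sum_{j=0}^{r-1} \Big(\binom{k-1}{j} + (-1)^r \binom{k-1}{r-1-j}\Big) t^j (1-t)^{r-1-j}$. -/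
/-!
Write `r = s + 1`, `k = a + s + 2` and `T_e(y) = ∑_{i ≤ e} C(a+i, i) y^i` (the partial sums of
`(1 - y)^{-(a+1)}`). By Pascal's rule `∑_{j ≤ e} C(a+1+e, j) x^j (1-x)^{e-j} = T_e(x)`, and the
reflection `j ↦ e - j` turns the same sum with `C(a+1+e, e-j)` into `T_e(1-x)`. So the left side
is an alternating binomial convolution of the `T_e(x)`; since
`∑_{d ≤ m} (-1)^d C(n+1, d) = (-1)^m C(n, m)`, it equals
`T_s(x) - ∑_{i ≤ s} (-1)^{s-i} C(k-1, s-i) C(a+i, i) x^i`. The right side is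
`T_s(x) - (-1)^s T_s(1-x)`, and expanding `T_s(1-x)` by the binomial theorem, trinomial revision
and the hockey-stick identity yields the same polynomial.
-/

open Finset

namespace Nat

theorem add_choose_mul_choose (a j t : ℕ) :
    (a + j + t).choose (j + t) * (j + t).choose j = (a + j).choose j * (a + j + t).choose t := by
  rw [choose_symm_add (a := j), choose_mul (Nat.le_add_left t j), Nat.add_sub_cancel,
    Nat.add_sub_cancel, mul_comm]

theorem sum_range_add_choose' (m d : ℕ) :
    ∑ i ∈ range (d + 1), (m + i).choose i = (m + d + 1).choose d := by
  calc ∑ i ∈ range (d + 1), (m + i).choose i = ∑ i ∈ range (d + 1), (i + m).choose m :=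
        sum_congr rfl fun i _ => by rw [add_comm, choose_symm_add]
    _ = (m + d + 1).choose d := by
        rw [sum_range_add_choose, add_comm d m,
          choose_symm_of_eq_add (show m + d + 1 = m + 1 + d by ring)]

theorem sum_range_add_choose_mul_choose (a n j : ℕ) (hj : j ≤ n) :
    ∑ i ∈ range (n + 1), (a + i).choose i * i.choose j =
      (a + j).choose j * (a + n + 1).choose (n - j) := by
  obtain ⟨d, rfl⟩ := Nat.exists_eq_add_of_le hj
  have hvanish : ∑ i ∈ range j, (a + i).choose i * i.choose j = 0 :=
    sum_eq_zero fun i hi => by rw [choose_eq_zero_of_lt (mem_range.mp hi), mul_zero]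
  rw [show j + d + 1 = j + (d + 1) by ring, sum_range_add, hvanish, zero_add]
  simp only [← add_assoc, add_choose_mul_choose, ← mul_sum, sum_range_add_choose',
    Nat.add_sub_cancel_left]

end Nat

section
variable {R : Type*} [CommRing R]

theorem sum_range_choose_succ_mul_pow_mul_one_sub_pow (n e : ℕ) (x : R) :
    ∑ j ∈ range (e + 2), ((n + 1).choose j : R) * (x ^ j * (1 - x) ^ (e + 1 - j)) =
      ∑ j ∈ range (e + 1), (n.choose j : R) * (x ^ j * (1 - x) ^ (e - j)) +
        n.choose (e + 1) * x ^ (e + 1) := by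
  set U := ∑ j ∈ range (e + 1), (n.choose j : R) * (x ^ j * (1 - x) ^ (e - j))
  have pascal : ∀ j, ((n + 1).choose (j + 1) : R) * (x ^ (j + 1) * (1 - x) ^ (e + 1 - (j + 1))) =
      x * (n.choose j * (x ^ j * (1 - x) ^ (e - j))) +
        n.choose (j + 1) * (x ^ (j + 1) * (1 - x) ^ (e + 1 - (j + 1))) := by
    intro j
    rw [Nat.choose_succ_succ', Nat.add_sub_add_right]
    push_cast
    ring
  have peel : ∑ j ∈ range (e + 2), (n.choose j : R) * (x ^ j * (1 - x) ^ (e + 1 - j)) =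
      (1 - x) * U + n.choose (e + 1) * x ^ (e + 1) := by
    rw [sum_range_succ, mul_sum, Nat.sub_self, pow_zero, mul_one]
    congr 1
    refine sum_congr rfl fun j hj => ?_
    rw [Nat.sub_add_comm (mem_range_succ_iff.mp hj), pow_succ]
    ring
  have reassemble : ∑ j ∈ range (e + 1),
        (n.choose (j + 1) : R) * (x ^ (j + 1) * (1 - x) ^ (e + 1 - (j + 1))) +
      ((n + 1).choose 0 : R) * (x ^ 0 * (1 - x) ^ (e + 1 - 0)) =
        ∑ j ∈ range (e + 2), (n.choose j : R) * (x ^ j * (1 - x) ^ (e + 1 - j)) := by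
    rw [sum_range_succ' _ (e + 1), Nat.choose_zero_right, Nat.choose_zero_right]
  rw [sum_range_succ', sum_congr rfl fun j _ => pascal j, sum_add_distrib, ← mul_sum, add_assoc,
    reassemble, peel]
  ring

theorem sum_range_choose_mul_pow_mul_one_sub_pow (a e : ℕ) (x : R) :
    ∑ j ∈ range (e + 1), ((a + 1 + e).choose j : R) * (x ^ j * (1 - x) ^ (e - j)) =
      ∑ i ∈ range (e + 1), ((a + i).choose i : R) * x ^ i := by
  induction e with
  | zero => simp
  | succ e ih =>
    rw [← add_assoc, sum_range_choose_succ_mul_pow_mul_one_sub_pow, ih,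
      sum_range_succ (n := e + 1), add_right_comm a 1 e, add_assoc a e 1]

theorem one_sub_pow_eq_sum (n : ℕ) (x : R) :
    (1 - x) ^ n = ∑ j ∈ range (n + 1), (-1) ^ j * (n.choose j : R) * x ^ j := by
  rw [← neg_add_eq_sub, add_pow]
  exact sum_congr rfl fun j _ => by rw [one_pow, neg_pow]; ring

theorem sum_range_add_choose_mul_one_sub_pow (a n : ℕ) (x : R) :
    ∑ i ∈ range (n + 1), ((a + i).choose i : R) * (1 - x) ^ i =
      ∑ j ∈ range (n + 1),
        (-1) ^ j * ((a + j).choose j * (a + n + 1).choose (n - j) : ℕ) * x ^ j := by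
  have expand : ∀ i ∈ range (n + 1), ((a + i).choose i : R) * (1 - x) ^ i =
      ∑ j ∈ range (n + 1), ((a + i).choose i : R) * ((-1) ^ j * (i.choose j : R) * x ^ j) := by
    intro i hi
    rw [one_sub_pow_eq_sum, mul_sum]
    refine sum_subset (range_subset_range.mpr (mem_range.mp hi)) fun j _ hj => ?_
    rw [Nat.choose_eq_zero_of_lt (show i < j by simpa using hj)]
    simp
  rw [sum_congr rfl expand, sum_comm]
  refine sum_congr rfl fun j hj => ?_
  rw [← Nat.sum_range_add_choose_mul_choose a n j (mem_range_succ_iff.mp hj), Nat.cast_sum,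
    mul_sum, sum_mul]
  exact sum_congr rfl fun i _ => by push_cast; ring

theorem sum_Ico_neg_one_pow_choose (c s i : ℕ) (hi : i ≤ s) :
    ∑ e ∈ Ico i (s + 1), (-1 : R) ^ (s - e) * ((c + 1).choose (s - e) : R) =
      (-1) ^ (s - i) * (c.choose (s - i) : R) := by
  have alternating := congrArg (Int.cast : ℤ → R)
    (Int.alternating_sum_range_choose_eq_choose (n := c) (m := s - i))
  push_cast at alternating
  rw [sum_Ico_reflect (fun u => (-1 : R) ^ u * ((c + 1).choose u : R)) i le_rfl, Nat.sub_self,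
    ← range_eq_Ico, Nat.succ_sub hi, alternating]

theorem sum_range_neg_one_pow_choose_mul_sum_range (c s : ℕ) (f : ℕ → R) :
    ∑ e ∈ range (s + 1),
        (-1) ^ (s - e) * (((c + 1).choose (s - e) : R) * ∑ i ∈ range (e + 1), f i) =
      ∑ i ∈ range (s + 1), (-1) ^ (s - i) * (c.choose (s - i) : R) * f i := by
  simp only [← mul_assoc, mul_sum, range_eq_Ico]
  rw [← sum_Ico_Ico_comm]
  refine sum_congr rfl fun i hi => ?_
  rw [← sum_mul, sum_Ico_neg_one_pow_choose c s i (by simp at hi; omega)]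

theorem sum_range_neg_one_pow_succ_sub_mul (s : ℕ) (g : ℕ → R) :
    ∑ e ∈ range s, (-1) ^ (s + 1 - e) * g e =
      g s - ∑ e ∈ range (s + 1), (-1) ^ (s - e) * g e := by
  rw [sum_range_succ, Nat.sub_self, pow_zero, one_mul, sub_add_cancel_right, ← sum_neg_distrib]
  exact sum_congr rfl fun e he => by rw [Nat.succ_sub (mem_range.mp he).le, pow_succ]; ring

theorem sum_range_choose_sub_mul_pow_mul_one_sub_pow (a e : ℕ) (x : R) :
    ∑ j ∈ range (e + 1), ((a + 1 + e).choose (e - j) : R) * (x ^ j * (1 - x) ^ (e - j)) =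
      ∑ i ∈ range (e + 1), ((a + i).choose i : R) * (1 - x) ^ i := by
  rw [← sum_range_choose_mul_pow_mul_one_sub_pow a e (1 - x), sub_sub_cancel, ← sum_flip]
  refine sum_congr rfl fun j hj => ?_
  rw [Nat.sub_sub_self (mem_range_succ_iff.mp hj), mul_comm (x ^ (e - j))]

theorem neg_one_pow_succ_mul_neg_one_pow {s j : ℕ} (h : j ≤ s) :
    (-1 : R) ^ (s + 1) * (-1) ^ j = -(-1) ^ (s - j) := by
  obtain ⟨d, rfl⟩ := Nat.exists_eq_add_of_le h
  rw [Nat.add_sub_cancel_left, ← pow_add, show j + d + 1 + j = 2 * j + (d + 1) by ring, pow_add,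
    pow_mul, neg_one_sq, one_pow, one_mul, pow_succ, mul_neg_one]

theorem hirose_murahara_ono_identity (a s : ℕ) (x : R) :
    ∑ e ∈ range s, (-1 : R) ^ (s + 1 - e) *
        (∑ j ∈ range (e + 1), ((a + 1 + e).choose j : R) * (x ^ j * (1 - x) ^ (e - j))) *
          ((a + s + 2).choose (s - e) : R) =
      ∑ j ∈ range (s + 1), (((a + 1 + s).choose j : R) +
        (-1) ^ (s + 1) * ((a + 1 + s).choose (s - j) : R)) * (x ^ j * (1 - x) ^ (s - j)) := by
  calc _ = ∑ e ∈ range s, (-1 : R) ^ (s + 1 - e) * (((a + s + 1 + 1).choose (s - e) : R) *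
          ∑ i ∈ range (e + 1), ((a + i).choose i : R) * x ^ i) :=
        sum_congr rfl fun e _ => by rw [sum_range_choose_mul_pow_mul_one_sub_pow]; ring
    _ = ∑ i ∈ range (s + 1), ((a + i).choose i : R) * x ^ i +
          (-1) ^ (s + 1) * ∑ i ∈ range (s + 1), ((a + i).choose i : R) * (1 - x) ^ i := by
        rw [sum_range_neg_one_pow_succ_sub_mul, sum_range_neg_one_pow_choose_mul_sum_range,
          sum_range_add_choose_mul_one_sub_pow, Nat.sub_self, Nat.choose_zero_right, Nat.cast_one,
          one_mul, mul_sum, sub_eq_add_neg, ← sum_neg_distrib]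
        congr 1
        refine sum_congr rfl fun i hi => ?_
        simp only [← mul_assoc, neg_one_pow_succ_mul_neg_one_pow (mem_range_succ_iff.mp hi)]
        push_cast
        ring
    _ = _ := by
        simp only [add_mul, sum_add_distrib, mul_assoc, ← mul_sum]
        rw [sum_range_choose_mul_pow_mul_one_sub_pow,
          sum_range_choose_sub_mul_pow_mul_one_sub_pow]

end

open Polynomial

theorem stmt13 (k r : ℕ) (hr : 1 ≤ r) (hkr : r < k) :
    ∑ e ∈ Finset.range (r - 1),
        (-1 : Polynomial ℚ) ^ (r - e) *
          (∑ j ∈ Finset.range (e + 1),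
            C (((k - r + e).choose j : ℚ)) * (X ^ j * (1 - X) ^ (e - j))) *
          C ((k.choose (r - e - 1) : ℚ)) =
      ∑ j ∈ Finset.range r,
        (C (((k - 1).choose j : ℚ)) + (-1 : Polynomial ℚ) ^ r * C (((k - 1).choose (r - 1 - j) : ℚ)))
          * (X ^ j * (1 - X) ^ (r - 1 - j)) := by
  obtain ⟨s, rfl⟩ : ∃ s, r = s + 1 := ⟨r - 1, by omega⟩
  obtain ⟨a, rfl⟩ : ∃ a, k = a + s + 2 := ⟨k - s - 2, by omega⟩
  have hk : a + s + 2 - (s + 1) = a + 1 := by omega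
  have hk' : a + s + 2 - 1 = a + 1 + s := by omega
  have hsub : ∀ e, s + 1 - e - 1 = s - e := fun e => by omega
  simp only [map_natCast, Nat.add_sub_cancel, hk, hk', hsub]
  exact hirose_murahara_ono_identity a s X
end

section
/- For a positive integer $k$ and nonnegative integer $m$, the generating-series version of the depth-one interpolated element satisfies: $h_m((k);t) = f_0(k+1,m)\,(k+m)$ in $\mathcal{I}^t$, where $h_m(\boldsymbol{k};t)$ is defined by $h_m(\boldsymbol{k};t) = \sum_{l=1}^{r}\sum_{e_1+\cdots+e_l+e_1'+\cdots+e_l'=m} t^{r-l+e_1+\cdots+e_l} \sum_{\boldsymbol{k}=(\boldsymbol{k}_1,\dots,\boldsymbol{k}_l)} \prod_{l'=1}^{l}\binom{\mathrm{wt}(\boldsymbol{k}_{l'})-\mathrm{dep}(\boldsymbol{k}_{l'})+e_{l'}+\delta_{l',1}-2}{e_{l'}}\big((\mathrm{wt}(\boldsymbol{k}_1),\dots,\mathrm{wt}(\boldsymbol{k}_l))\oplus\boldsymbol{e}\oplus\boldsymbol{e}'\big)$. In particular, $h_m((1);t) = (1+m)$, i.e., the single index $(m+1)$ with coefficient $1$.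 -/
open Polynomial Finset

/-- `h_m(𝐤;t)` of Hirose–Murahara–Ono, an element of the free `ℚ[t]`-module on indices
(realized as `List ℕ →₀ ℚ[t]`).  The sum over decompositions `𝐤 = (𝐤_1,…,𝐤_l)` into
consecutive nonempty blocks is realized via `Composition K.length`. -/
noncomputable def hHMO (m : ℕ) (K : List ℕ) : (List ℕ) →₀ Polynomial ℚ :=
  ∑ c : Composition K.length,
    ∑ p ∈ Finset.HasAntidiagonal.antidiagonal m,
      ∑ e ∈ Finset.Nat.antidiagonalTuple c.length p.1,
        ∑ e' ∈ Finset.Nat.antidiagonalTuple c.length p.2,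
          Finsupp.single
            (List.ofFn fun j : Fin c.length =>
              ((K.splitWrtComposition c).getD j []).sum + e j + e' j)
            (X ^ (K.length - c.length + p.1) *
              ∏ j : Fin c.length,
                (((((K.splitWrtComposition c).getD j []).sum
                      - ((K.splitWrtComposition c).getD j []).length
                      + e j + (if (j : ℕ) = 0 then 1 else 0) - 2).choose (e j) : ℕ) :
                  Polynomial ℚ))

/-! Only the trivial composition of a single index contributes, so `h_m((k);t)` is the index
`(k+m)` with coefficient `∑_{j ≤ m} binom(k+j-2, j) t^j`. Pascal's rule and `t + (1-t) = 1`
give, by induction on `m`,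
`∑_{j ≤ m} binom(a+m, j) t^j (1-t)^(m-j) = ∑_{j ≤ m} binom(a+j-1, j) t^j`,
which for `a = k - 1` identifies this coefficient with `f_0(k+1, m)`. For `k = 1` only the
term `j = 0` survives. -/

section

variable {R : Type*} [CommSemiring R] {x y : R}

theorem sum_range_choose_succ_mul_pow_mul_pow (hxy : x + y = 1) (n m : ℕ) :
    ∑ j ∈ range (m + 2), ((n + 1).choose j : R) * x ^ j * y ^ (m + 1 - j)
      = ∑ j ∈ range (m + 1), (n.choose j : R) * x ^ j * y ^ (m - j)
        + (n.choose (m + 1) : R) * x ^ (m + 1) := by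
  have pascal : ∀ i ∈ range (m + 1),
      ((n + 1).choose (i + 1) : R) * x ^ (i + 1) * y ^ (m + 1 - (i + 1))
        = (n.choose i : R) * x ^ i * y ^ (m - i) * x
          + (n.choose (i + 1) : R) * x ^ (i + 1) * y ^ (m + 1 - (i + 1)) := by
    intro i _
    rw [Nat.choose_succ_succ, Nat.cast_add, Nat.succ_sub_succ]
    ring
  have split_last : ∑ j ∈ range (m + 2), (n.choose j : R) * x ^ j * y ^ (m + 1 - j)
      = ∑ j ∈ range (m + 1), (n.choose j : R) * x ^ j * y ^ (m - j) * y
        + (n.choose (m + 1) : R) * x ^ (m + 1) := by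
    rw [sum_range_succ, Nat.sub_self, pow_zero, mul_one]
    congr 1
    refine sum_congr rfl fun j hj => ?_
    rw [show m + 1 - j = m - j + 1 by simp at hj; omega]
    ring
  rw [sum_range_succ', sum_congr rfl pascal, sum_add_distrib, add_assoc,
    show (n + 1).choose 0 = n.choose 0 by simp,
    ← sum_range_succ' (fun j => (n.choose j : R) * x ^ j * y ^ (m + 1 - j)),
    split_last, ← add_assoc, ← sum_add_distrib]
  simp_rw [← mul_add, hxy, mul_one]

/-- With truncated subtraction `(a + j - 1).choose j` is `binom(a+j-1, j)` under the convention
`binom(j-1, j) = δ_{j,0}`, which is what the case `a = 0` needs. -/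
theorem sum_range_choose_add_mul_pow_mul_pow (hxy : x + y = 1) (a m : ℕ) :
    ∑ j ∈ range (m + 1), ((a + m).choose j : R) * x ^ j * y ^ (m - j)
      = ∑ j ∈ range (m + 1), ((a + j - 1).choose j : R) * x ^ j := by
  induction m with
  | zero => simp
  | succ m ih =>
    rw [← add_assoc, sum_range_choose_succ_mul_pow_mul_pow hxy, ih, sum_range_succ _ (m + 1),
      show a + (m + 1) - 1 = a + m by omega]

end

theorem sum_range_choose_pred_mul_pow {R : Type*} [CommSemiring R] (x : R) (m : ℕ) :
    ∑ j ∈ range (m + 1), ((j - 1).choose j : R) * x ^ j = 1 := by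
  rw [sum_eq_single_of_mem 0 (by simp)]
  · simp
  · intro j _ hj
    simp [Nat.choose_eq_zero_of_lt (Nat.sub_lt (Nat.pos_of_ne_zero hj) one_pos)]

theorem hHMO_singleton (m k : ℕ) :
    hHMO m [k] = Finsupp.single [k + m]
      (∑ j ∈ range (m + 1), ((k - 1 + j - 1).choose j : Polynomial ℚ) * X ^ j) := by
  rw [hHMO, Fintype.sum_eq_single (Composition.ones [k].length) fun c hc =>
    (hc (Composition.eq_ones_iff_le_length.2 (c.length_pos_of_pos one_pos))).elim,
    Nat.sum_antidiagonal_eq_sum_range_succ_mk, Finsupp.single_finsetSum]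
  refine sum_congr rfl fun j hj => ?_
  -- `(Composition.ones 1).length` is `1` only up to unfolding, and it occurs in `Fin` binders.
  change ∑ e ∈ Nat.antidiagonalTuple 1 j, ∑ e' ∈ Nat.antidiagonalTuple 1 (m - j),
      Finsupp.single (List.ofFn fun i : Fin 1 => ([[k]].getD i []).sum + e i + e' i)
        (X ^ (1 - 1 + j) * ∏ i : Fin 1, (((([[k]].getD i []).sum - ([[k]].getD i []).length
          + e i + (if (i : ℕ) = 0 then 1 else 0) - 2).choose (e i) : ℕ) : Polynomial ℚ)) = _
  simp [Finset.Nat.antidiagonalTuple_one, mul_comm,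
    show k + j + (m - j) = k + m by simp at hj; omega]

theorem fHMO_zero_succ (k m : ℕ) (hk : 1 ≤ k) :
    fHMO 0 (k + 1) m
      = ∑ j ∈ range (m + 1), ((k - 1 + j - 1).choose j : Polynomial ℚ) * X ^ j := by
  rw [← sum_range_choose_add_mul_pow_mul_pow (add_sub_cancel X 1), fHMO,
    show k + 1 + m - 0 - 2 = k - 1 + m by omega]
  simp only [Nat.sub_zero, Nat.choose_zero_right, Nat.cast_one, one_mul, smul_eq_C_mul,
    C_eq_natCast, mul_assoc]

theorem stmt17 (k m : ℕ) (hk : 1 ≤ k) :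
    hHMO m [k] = Finsupp.single [k + m] (fHMO 0 (k + 1) m)
      ∧ hHMO m [1] = Finsupp.single [1 + m] 1 := by
  refine ⟨by rw [hHMO_singleton, fHMO_zero_succ k m hk], ?_⟩
  rw [hHMO_singleton, Nat.sub_self]
  simp only [zero_add, sum_range_choose_pred_mul_pow]
end
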